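/- Fix k ≥ 1 and let p be a prime with p > 3 and p dividing 2k+1. Then every root of the reduction of P_{k-1} modulo p, in an algebraic closure of 𝔽_p, has multiplicity at most 4. -/

import Mathlib

open Polynomial

/-- For `k ≥ 1`, the polynomial `P_{k-1}(q) = 1 + ∑_{l=1}^{k} (q⁴−q³−q²−q)·q^{4(l−1)}`,
here `Pm1 k` denotes `P_{k-1}`. -/
noncomputable def Pm1 (k : ℕ) : Polynomial ℤ :=
  1 + ∑ l ∈ Finset.range k, (X ^ 4 - X ^ 3 - X ^ 2 - X) * X ^ (4 * l)

/-!
Multiplying by `X⁴ - 1` telescopes the geometric sum: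
`(X⁴ - 1) P_{k-1} = X^m (X³ - X² - X - 1) + (X³ + X² + X - 1)` with `m = 4k + 1`.
A root `β` of multiplicity `≥ 5` of `P_{k-1}` mod `p` is a root of the fourth derivative of the
right-hand side, in which the cubic summand disappears. The fourth derivative of `X^n` is
`(n)₄ X^(n-4)`, and `p ∣ 2k + 1` forces `m ≡ -1 (mod p)`, so the falling factorials at
`m + 3, m + 2, m + 1` vanish while the one at `m` is `(-1)₄ = 24`. Hence `24 β^m = 0`, which is
impossible since `p > 3` and `β ≠ 0` (as `P_{k-1}(0) = 1`).
-/

theorem X_pow_four_sub_one_mul_Pm1 (k : ℕ) :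
    (X ^ 4 - 1) * Pm1 k = X ^ (4 * k + 1) * (X ^ 3 - X ^ 2 - X - 1) + (X ^ 3 + X ^ 2 + X - 1) := by
  induction k with
  | zero => simp [Pm1]; ring
  | succ k ih =>
    rw [Pm1, Finset.sum_range_succ, ← add_assoc, ← Pm1, mul_add, ih]
    ring

theorem eval_zero_map_Pm1 {R : Type*} [CommRing R] (φ : ℤ →+* R) (k : ℕ) :
    ((Pm1 k).map φ).eval 0 = 1 := by
  simp [Pm1, eval_finsetSum]

section IterateDerivative

variable {R : Type*} [CommRing R]

/-- Multiplying by `x ^ k` avoids the truncated exponent `n - k`. -/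
theorem eval_iterate_derivative_X_pow_mul_pow (n k : ℕ) (x : R) :
    (derivative^[k] (X ^ n : R[X])).eval x * x ^ k = (descPochhammer R k).eval (n : R) * x ^ n := by
  rw [iterate_derivative_X_pow_eq_C_mul, descPochhammer_eval_eq_descFactorial, eval_mul, eval_C,
    eval_pow, eval_X]
  rcases le_or_gt k n with h | h
  · rw [mul_assoc, ← pow_add, Nat.sub_add_cancel h]
  · simp [Nat.descFactorial_eq_zero_iff_lt.mpr h]

theorem eval_iterate_derivative_four_mul_pow_four {m : ℕ} (hm : (m : R) = -1) (x : R) :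
    (derivative^[4] (X ^ m * (X ^ 3 - X ^ 2 - X - 1) : R[X])).eval x * x ^ 4 = -24 * x ^ m := by
  have hexpand : (X ^ m * (X ^ 3 - X ^ 2 - X - 1) : R[X])
      = X ^ (m + 3) - X ^ (m + 2) - X ^ (m + 1) - X ^ m := by ring
  simp only [hexpand, iterate_derivative_sub, eval_sub, sub_mul,
    eval_iterate_derivative_X_pow_mul_pow]
  push_cast [hm]
  simp only [descPochhammer_succ_eval, descPochhammer_zero, eval_one]
  ring

end IterateDerivative

theorem natCast_four_mul_add_one_eq_neg_one {R : Type*} [CommRing R] (p : ℕ) [CharP R p] {k : ℕ}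
    (hdvd : p ∣ 2 * k + 1) : ((4 * k + 1 : ℕ) : R) = -1 := by
  have h : ((2 * k + 1 : ℕ) : R) = 0 := (CharP.cast_eq_zero_iff R p _).2 hdvd
  push_cast at h ⊢
  linear_combination 2 * h

theorem twentyFour_ne_zero {R : Type*} [CommRing R] [IsDomain R] (p : ℕ) [CharP R p]
    (hp3 : 3 < p) : (24 : R) ≠ 0 := by
  have h2 : ((2 : ℕ) : R) ≠ 0 := CharP.cast_ne_zero_of_ne_of_prime R Nat.prime_two (by omega)
  have h3 : ((3 : ℕ) : R) ≠ 0 := CharP.cast_ne_zero_of_ne_of_prime R Nat.prime_three (by omega)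
  rw [show (24 : R) = 2 ^ 3 * 3 by norm_num]
  push_cast at h2 h3
  exact mul_ne_zero (pow_ne_zero 3 h2) h3

theorem stmt_14_general (k : ℕ) (p : ℕ) [Fact p.Prime] (hp3 : 3 < p)
    (hdvd : p ∣ 2 * k + 1) :
    ∀ β : AlgebraicClosure (ZMod p),
      Polynomial.rootMultiplicity β
        ((Pm1 k).map (Int.castRingHom (AlgebraicClosure (ZMod p)))) ≤ 4 := by
  set K := AlgebraicClosure (ZMod p)
  intro β
  by_contra! hβ
  set f := (Pm1 k).map (Int.castRingHom K)
  have hf0 : f.eval 0 = 1 := eval_zero_map_Pm1 _ k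
  have hf : f ≠ 0 := fun h ↦ by simp [h] at hf0
  have hβ0 : β ≠ 0 := by
    intro h0
    have h : f.IsRoot β := (rootMultiplicity_pos hf).1 (by omega)
    rw [h0, IsRoot, hf0] at h
    exact one_ne_zero h
  have hF : (X ^ 4 - 1) * f
      = X ^ (4 * k + 1) * (X ^ 3 - X ^ 2 - X - 1) + (X ^ 3 + X ^ 2 + X - 1) := by
    simpa [f] using congrArg (map (Int.castRingHom K)) (X_pow_four_sub_one_mul_Pm1 k)
  have hF0 : (X ^ 4 - 1) * f ≠ 0 :=
    mul_ne_zero (by simpa using X_pow_sub_C_ne_zero (R := K) four_pos 1) hf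
  have hroot : (derivative^[4] (X ^ (4 * k + 1) * (X ^ 3 - X ^ 2 - X - 1) : K[X])).IsRoot β := by
    have hmult : 4 < ((X ^ 4 - 1) * f).rootMultiplicity β :=
      hβ.trans_le (rootMultiplicity_le_rootMultiplicity_of_dvd hF0 (dvd_mul_left f _) β)
    have h := isRoot_iterate_derivative_of_lt_rootMultiplicity hmult
    have hcubic : derivative^[4] (X ^ 3 + X ^ 2 + X - 1 : K[X]) = 0 :=
      iterate_derivative_eq_zero (by compute_degree!)
    rwa [hF, iterate_map_add, hcubic, add_zero] at h
  have h := eval_iterate_derivative_four_mul_pow_four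
    (natCast_four_mul_add_one_eq_neg_one p hdvd) β
  rw [hroot.eq_zero, zero_mul, eq_comm, neg_mul, neg_eq_zero] at h
  exact mul_ne_zero (twentyFour_ne_zero p hp3) (pow_ne_zero _ hβ0) h

/-- For `k ≥ 1` and a prime `p > 3` dividing `2k+1`, every root of the
reduction of `P_{k-1}` mod `p` in an algebraic closure of `𝔽_p` has multiplicity at
most `4`. -/
theorem stmt_14 (k : ℕ) (hk : 1 ≤ k) (p : ℕ) [Fact p.Prime] (hp3 : 3 < p)
    (hdvd : p ∣ 2 * k + 1) :
    ∀ β : AlgebraicClosure (ZMod p),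
      Polynomial.rootMultiplicity β
        ((Pm1 k).map (Int.castRingHom (AlgebraicClosure (ZMod p)))) ≤ 4 :=
  stmt_14_general k p hp3 hdvd
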